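/- The first absolute moment of the Mellin–Fejér kernel is infinite: M₁(F⁰₁) := sup_{x>0} ∑_{k∈ℤ} F⁰₁(e^{-k}x) |k − log x| = +∞; indeed already for x with log x ∉ ℤ the series ∑_k sin²((log x − k)/2)/|log x − k| diverges. -/

import Mathlib

open Real

/-- `sinc u = sin(πu)/(πu)`, `sinc 0 = 1`. -/
noncomputable def sinc (u : ℝ) : ℝ :=
  if u = 0 then 1 else Real.sin (π * u) / (π * u)

/-- The Mellin–Fejér kernel with `c = 0`, `ρ = 1`. -/
noncomputable def mellinFejer01 (x : ℝ) : ℝ :=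
  1 / (2 * π) * _root_.sinc (Real.log (Real.sqrt x) / π) ^ 2

/-! With `L = log x`, the `k`-th term of the moment series is `(2/π) sin²((L - k)/2) / |L - k|`.
Two consecutive arguments `(L - n)/2`, `(L - n - 1)/2` differ by `1/2`, so their squared sines
cannot both be small: `sin² a + sin² b ≥ 1 - |cos (a - b)|`. Hence each pair of consecutive
terms is `≳ 1/n`, and the series diverges like the harmonic series. -/

lemma sin_sq_add_sin_sq (a b : ℝ) :
    sin a ^ 2 + sin b ^ 2 = 1 - cos (a + b) * cos (a - b) := by
  rw [cos_add, cos_sub]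
  nlinarith [sin_sq_add_cos_sq a, sin_sq_add_cos_sq b]

lemma one_sub_abs_cos_sub_le_sin_sq_add_sin_sq (a b : ℝ) :
    1 - |cos (a - b)| ≤ sin a ^ 2 + sin b ^ 2 := by
  rw [sin_sq_add_sin_sq]
  have h : cos (a + b) * cos (a - b) ≤ |cos (a - b)| :=
    calc cos (a + b) * cos (a - b) ≤ |cos (a + b) * cos (a - b)| := le_abs_self _
      _ = |cos (a + b)| * |cos (a - b)| := abs_mul _ _
      _ ≤ 1 * |cos (a - b)| := by gcongr; exact abs_cos_le_one _
      _ = |cos (a - b)| := one_mul _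
  linarith

lemma not_summable_of_div_succ_le_add_succ {f : ℕ → ℝ} {c : ℝ} (hc : 0 < c)
    (h : ∀ n : ℕ, c / (n + 1) ≤ f n + f (n + 1)) : ¬ Summable f := by
  intro hf
  have hpairs : Summable fun n => f n + f (n + 1) := hf.add ((summable_nat_add_iff 1).mpr hf)
  have hharm : Summable fun n : ℕ => c * (1 / ((n + 1 : ℕ) : ℝ)) :=
    hpairs.of_nonneg_of_le (fun n => by positivity)
      (fun n => by simpa only [Nat.cast_succ, mul_one_div] using h n)
  exact Real.not_summable_one_div_natCast
    ((summable_nat_add_iff 1).mp ((summable_mul_left_iff hc.ne').mp hharm))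

lemma not_summable_sin_sq_div_abs_sub (L : ℝ) (hL : ∀ k : ℤ, L ≠ k) :
    ¬ Summable fun k : ℤ => sin ((L - k) / 2) ^ 2 / |L - k| := by
  have hD : ∀ m : ℕ, 0 < |L - m| ∧ |L - m| ≤ |L| + m := fun m => by
    refine ⟨abs_pos.mpr (sub_ne_zero.mpr (by exact_mod_cast hL m)), ?_⟩
    simpa only [Nat.abs_cast] using abs_sub L m
  have hcos : 0 < cos (1 / 2) :=
    cos_pos_of_mem_Ioo ⟨by linarith [pi_gt_three], by linarith [pi_gt_three]⟩
  have hc : 0 < 1 - cos (1 / 2) := by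
    have := cos_lt_cos_of_nonneg_of_le_pi le_rfl (by linarith [pi_gt_three]) one_half_pos
    rw [cos_zero] at this
    linarith
  intro hg
  refine not_summable_of_div_succ_le_add_succ (c := (1 - cos (1 / 2)) / (|L| + 1))
    (by positivity) (fun n => ?_) (hg.comp_injective Nat.cast_injective)
  obtain ⟨h0, h0le⟩ := hD n
  obtain ⟨h1, h1le⟩ := hD (n + 1)
  have hsq := one_sub_abs_cos_sub_le_sin_sq_add_sin_sq ((L - n) / 2) ((L - (n + 1 : ℕ)) / 2)
  rw [show (L - n) / 2 - (L - (n + 1 : ℕ)) / 2 = 1 / 2 by push_cast; ring, abs_of_pos hcos] at hsq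
  have hn : (0 : ℝ) ≤ n := n.cast_nonneg
  calc (1 - cos (1 / 2)) / (|L| + 1) / (n + 1)
      = (1 - cos (1 / 2)) / ((|L| + 1) * (n + 1)) := div_div _ _ _
    _ ≤ (sin ((L - n) / 2) ^ 2 + sin ((L - (n + 1 : ℕ)) / 2) ^ 2) / ((|L| + 1) * (n + 1)) := by
        gcongr
    _ ≤ sin ((L - n) / 2) ^ 2 / |L - n|
          + sin ((L - (n + 1 : ℕ)) / 2) ^ 2 / |L - (n + 1 : ℕ)| := by
        rw [add_div]
        gcongr
        · nlinarith [abs_nonneg L]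
        · push_cast at h1le ⊢; nlinarith [abs_nonneg L]

lemma mellinFejer01_mul_abs_log {y : ℝ} (hy : 0 ≤ y) :
    mellinFejer01 y * |log y| = 2 / π * (sin (log y / 2) ^ 2 / |log y|) := by
  rcases eq_or_ne (log y) 0 with h | h
  · simp [h]
  have hu : log y / 2 / π ≠ 0 := by positivity
  rw [mellinFejer01, log_sqrt hy, _root_.sinc, if_neg hu, mul_div_cancel₀ _ pi_ne_zero]
  have habs : |log y| ≠ 0 := abs_ne_zero.mpr h
  rw [div_pow, ← sq_abs (log y / 2), abs_div, abs_two]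
  field_simp

/-- The first absolute moment of the Mellin–Fejér kernel is infinite: for every `x > 0`
with `log x ∉ ℤ`, the series defining `M₁(F⁰₁, x)` diverges. -/
theorem mellinFejer01_first_moment_infinite :
    ∀ x : ℝ, 0 < x → (∀ k : ℤ, Real.log x ≠ k) →
      ¬ Summable (fun k : ℤ =>
          mellinFejer01 (Real.exp (-k) * x) * |(k : ℝ) - Real.log x|) ∧
      ¬ Summable (fun k : ℤ =>
          Real.sin ((Real.log x - k) / 2) ^ 2 / |Real.log x - (k : ℝ)|) := by
  intro x hx hL
  have hlog : ∀ k : ℤ, log (exp (-k) * x) = log x - k := fun k => by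
    rw [log_mul (exp_ne_zero _) hx.ne', log_exp]; ring
  have hterm : ∀ k : ℤ, mellinFejer01 (exp (-k) * x) * |(k : ℝ) - log x|
      = 2 / π * (sin ((log x - k) / 2) ^ 2 / |log x - k|) := fun k => by
    rw [abs_sub_comm, ← hlog k, mellinFejer01_mul_abs_log (by positivity)]
  have hdiv := not_summable_sin_sq_div_abs_sub _ hL
  simp_rw [hterm, summable_mul_left_iff (by positivity : 2 / π ≠ 0)]
  exact ⟨hdiv, hdiv⟩
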